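/- arXiv:0810.4667 — 6 statements merged into one kernel-verified Lean document; each statement's English description precedes it below -/
import Mathlib

section
/- If G is a graph with no isolated vertices on n vertices with maximum degree Δ(G), then the total domination number satisfies γ_t(G) ≤ n − Δ(G) + 1. -/
/-!
Let `v` be a vertex of maximum degree and let `f` choose a neighbour of every vertex. Then `v`
totally dominates its `Δ` neighbours and `f x` totally dominates each of the remaining `n - Δ`
vertices `x`, so `{v} ∪ f '' (N(v))ᶜ` is a total dominating set of size at most `n - Δ + 1`.
-/

/-- A total dominating set: every vertex has a neighbor in `S`. -/
def SimpleGraph.TotalDominatingSet {V : Type*} (G : SimpleGraph V) (S : Set V) : Prop :=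
  ∀ v : V, ∃ u ∈ S, G.Adj v u

/-- The total domination number: minimum cardinality of a total dominating set. -/
noncomputable def SimpleGraph.totalDominationNumber {V : Type*} (G : SimpleGraph V) : ℕ :=
  sInf {k | ∃ S : Set V, G.TotalDominatingSet S ∧ S.ncard = k}

namespace SimpleGraph

variable {V : Type*} (G : SimpleGraph V)

theorem totalDominatingSet_union_image {f : V → V} (hf : ∀ x, G.Adj x (f x)) (D : Set V) :
    G.TotalDominatingSet (D ∪ f '' {x | ∀ u ∈ D, ¬ G.Adj x u}) := by
  intro x
  by_cases hx : ∃ u ∈ D, G.Adj x u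
  · obtain ⟨u, huD, hxu⟩ := hx
    exact ⟨u, Or.inl huD, hxu⟩
  · push Not at hx
    exact ⟨f x, Or.inr ⟨x, hx, rfl⟩, hf x⟩

theorem totalDominationNumber_le_ncard {S : Set V} (hS : G.TotalDominatingSet S) :
    G.totalDominationNumber ≤ S.ncard :=
  Nat.sInf_le ⟨S, hS, rfl⟩

theorem totalDominationNumber_le_ncard_compl_neighborSet_add_one [Finite V]
    (hiso : ∀ v : V, ∃ u : V, G.Adj v u) (v : V) :
    G.totalDominationNumber ≤ (G.neighborSet v)ᶜ.ncard + 1 := by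
  choose f hf using hiso
  have hmissed : {x | ∀ u ∈ ({v} : Set V), ¬ G.Adj x u} = (G.neighborSet v)ᶜ := by
    ext; simp [adj_comm]
  have hS := G.totalDominatingSet_union_image hf {v}
  rw [hmissed] at hS
  calc G.totalDominationNumber ≤ ({v} ∪ f '' (G.neighborSet v)ᶜ).ncard :=
        G.totalDominationNumber_le_ncard hS
    _ ≤ (f '' (G.neighborSet v)ᶜ).ncard + 1 := by
        rw [Set.singleton_union]; exact Set.ncard_insert_le _ _
    _ ≤ (G.neighborSet v)ᶜ.ncard + 1 :=
        Nat.add_le_add_right (Set.ncard_image_le (Set.toFinite _)) 1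

end SimpleGraph

theorem total_domination_le_card_sub_maxDegree_add_one
    {V : Type*} [Fintype V] (G : SimpleGraph V) [DecidableRel G.Adj]
    (hiso : ∀ v : V, ∃ u : V, G.Adj v u) :
    G.totalDominationNumber ≤ Fintype.card V - G.maxDegree + 1 := by
  rcases isEmpty_or_nonempty V with _ | _
  · have h0 : G.totalDominationNumber ≤ (∅ : Set V).ncard :=
      G.totalDominationNumber_le_ncard isEmptyElim
    rw [Set.ncard_empty] at h0
    omega
  obtain ⟨v, hv⟩ := G.exists_maximal_degree_vertex
  calc G.totalDominationNumber ≤ (G.neighborSet v)ᶜ.ncard + 1 :=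
        G.totalDominationNumber_le_ncard_compl_neighborSet_add_one hiso v
    _ = Fintype.card V - G.maxDegree + 1 := by
        rw [Set.ncard_compl, Nat.card_eq_fintype_card, hv, ← SimpleGraph.card_neighborSet_eq_degree,
          Set.ncard_eq_toFinset_card', Set.toFinset_card]
end

section
/- For n ≥ 3, the total domination number of the cycle C_n equals n/2 if n ≡ 0 (mod 4), and equals ⌊n/2⌋ + 1 otherwise. -/
open Finset
open scoped Fin.CommRing

theorem card_filter_mod_four_eq_one_or_two (n : ℕ) :
    #{i ∈ range n | i % 4 = 1 ∨ i % 4 = 2} = (n + 2) / 4 + (n + 1) / 4 := by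
  induction n with
  | zero => rfl
  | succ n ih =>
    rw [range_add_one, filter_insert]
    split_ifs
    · rw [card_insert_of_notMem (by simp), ih]; omega
    · rw [ih]; omega

namespace SimpleGraph

variable {V : Type*} {G : SimpleGraph V}

theorem TotalDominatingSet.mono {H : SimpleGraph V} {S : Set V} (hGH : G ≤ H)
    (hS : G.TotalDominatingSet S) : H.TotalDominatingSet S :=
  fun v => (hS v).imp fun _ ⟨hu, hvu⟩ => ⟨hu, hGH hvu⟩

section Regular

variable [DecidableRel G.Adj] {S : Finset V}

theorem TotalDominatingSet.one_le_card_filter_adj (hS : G.TotalDominatingSet ↑S) (v : V) :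
    1 ≤ #{u ∈ S | G.Adj v u} := by
  obtain ⟨u, hu, hvu⟩ := hS v
  exact card_pos.mpr ⟨u, mem_filter.mpr ⟨hu, hvu⟩⟩

variable [Fintype V] {d : ℕ}

theorem IsRegularOfDegree.sum_card_filter_adj (hG : G.IsRegularOfDegree d) (S : Finset V) :
    ∑ v, #{u ∈ S | G.Adj v u} = d * #S := by
  classical
  calc ∑ v, #{u ∈ S | G.Adj v u} = ∑ u ∈ S, #{v | G.Adj v u} :=
        sum_card_bipartiteAbove_eq_sum_card_bipartiteBelow _
    _ = ∑ u ∈ S, d := sum_congr rfl fun u _ => by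
        rw [← hG u, ← card_neighborFinset_eq_degree, neighborFinset_eq_filter]
        simp only [adj_comm]
    _ = d * #S := by rw [sum_const, smul_eq_mul, mul_comm]

theorem TotalDominatingSet.card_le_mul_card (hG : G.IsRegularOfDegree d)
    (hS : G.TotalDominatingSet ↑S) : Fintype.card V ≤ d * #S :=
  calc Fintype.card V = ∑ _v : V, 1 := by simp
    _ ≤ ∑ v, #{u ∈ S | G.Adj v u} := sum_le_sum fun v _ => hS.one_le_card_filter_adj v
    _ = d * #S := hG.sum_card_filter_adj S

theorem TotalDominatingSet.card_filter_adj_eq_one (hG : G.IsRegularOfDegree d)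
    (hS : G.TotalDominatingSet ↑S) (hcard : Fintype.card V = d * #S) (v : V) :
    #{u ∈ S | G.Adj v u} = 1 := by
  have hsum : ∑ _v : V, 1 = ∑ v, #{u ∈ S | G.Adj v u} := by
    simp [hG.sum_card_filter_adj, ← hcard]
  exact ((sum_eq_sum_iff_of_le fun v _ => hS.one_le_card_filter_adj v).mp hsum v
    (mem_univ v)).symm

end Regular

theorem cycleGraph_adj_iff_eq_sub_one_or_eq_add_one {n : ℕ} {u v : Fin (n + 2)} :
    (cycleGraph (n + 2)).Adj u v ↔ v = u - 1 ∨ v = u + 1 := by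
  rw [← mem_neighborSet, cycleGraph_neighborSet]
  rfl

theorem cycleGraph_isRegularOfDegree (n : ℕ) : (cycleGraph (n + 3)).IsRegularOfDegree 2 :=
  fun _ => cycleGraph_degree_three_le

theorem add_two_mem_iff_notMem_of_card_filter_adj_eq_one {m : ℕ} {S : Finset (Fin (m + 3))}
    (h : ∀ v, #{u ∈ S | (cycleGraph (m + 3)).Adj v u} = 1) (x : Fin (m + 3)) :
    x + 2 ∈ S ↔ x ∉ S := by
  have hx : x ≠ x + 2 :=
    left_ne_add.mpr (by simp [Fin.ext_iff, Nat.mod_eq_of_lt (show 2 < m + 3 by omega)])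
  have hx₁ := h (x + 1)
  simp only [cycleGraph_adj_iff_eq_sub_one_or_eq_add_one, add_sub_cancel_right, add_assoc,
    one_add_one_eq_two, filter_or, filter_eq'] at hx₁
  by_cases h₁ : x ∈ S <;> by_cases h₂ : x + 2 ∈ S <;> simp_all

theorem even_card_of_totalDominatingSet_cycleGraph {m : ℕ} {S : Finset (Fin (m + 3))}
    (hS : (cycleGraph (m + 3)).TotalDominatingSet ↑S) (hcard : m + 3 = 2 * #S) : Even #S := by
  have hone := hS.card_filter_adj_eq_one (cycleGraph_isRegularOfDegree m) (by simpa using hcard)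
  -- with membership encoded as `±1`, `x + 2 ∈ S ↔ x ∉ S` is antiperiodicity
  let f : Fin (m + 3) → ℤ := fun x => if x ∈ S then 1 else -1
  have hf : Function.Antiperiodic f 2 := fun x => by
    simp only [f, add_two_mem_iff_notMem_of_card_filter_adj_eq_one hone x]
    split_ifs <;> norm_num
  by_contra hodd
  obtain ⟨k, hk⟩ := Nat.not_even_iff_odd.mp hodd
  have hzero : #S • (2 : Fin (m + 3)) = 0 := by
    rw [nsmul_eq_mul]
    exact_mod_cast Fin.natCast_eq_zero.mpr ⟨1, by omega⟩
  have hf₀ := hf.odd_nsmul_antiperiodic k 0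
  rw [← hk, hzero, add_zero] at hf₀
  by_cases h₀ : (0 : Fin (m + 3)) ∈ S <;> simp [f, h₀] at hf₀

theorem le_card_of_totalDominatingSet_cycleGraph {m : ℕ} {S : Finset (Fin (m + 3))}
    (hS : (cycleGraph (m + 3)).TotalDominatingSet ↑S) :
    (if (m + 3) % 4 = 0 then (m + 3) / 2 else (m + 3) / 2 + 1) ≤ #S := by
  have hle := hS.card_le_mul_card (cycleGraph_isRegularOfDegree m)
  rw [Fintype.card_fin] at hle
  by_cases hcard : m + 3 = 2 * #S
  · obtain ⟨k, hk⟩ := even_card_of_totalDominatingSet_cycleGraph hS hcard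
    split_ifs <;> omega
  · split_ifs <;> omega

theorem exists_totalDominatingSet_pathGraph_card {n : ℕ} (hn : 2 ≤ n) :
    ∃ S : Finset (Fin n), (pathGraph n).TotalDominatingSet ↑S ∧
      #S = if n % 4 = 0 then n / 2 else n / 2 + 1 := by
  set T : Finset ℕ := insert (n - 2) {i ∈ range n | i % 4 = 1 ∨ i % 4 = 2} with hT
  have hmemT : ∀ i, i ∈ T ↔ i = n - 2 ∨ i < n ∧ (i % 4 = 1 ∨ i % 4 = 2) := by
    simp [T]
  have hTn : ∀ i ∈ T, i < n := fun i hi => by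
    rw [hmemT] at hi
    omega
  refine ⟨T.attachFin hTn, fun v => ?_, ?_⟩
  · have hv := v.isLt
    obtain ⟨u, hu, huT, hvu⟩ : ∃ u < n, u ∈ T ∧ (v.val + 1 = u ∨ u + 1 = v.val) := by
      by_cases h₁ : v.val % 4 = 2 ∨ v.val % 4 = 3
      · exact ⟨v - 1, by omega, (hmemT _).mpr (by omega), by omega⟩
      by_cases h₂ : v.val + 1 < n
      · exact ⟨v + 1, h₂, (hmemT _).mpr (by omega), by omega⟩
      · exact ⟨n - 2, by omega, (hmemT _).mpr (by omega), by omega⟩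
    exact ⟨⟨u, hu⟩, (mem_attachFin hTn).mpr huT, pathGraph_adj.mpr hvu⟩
  · rw [card_attachFin, hT, card_insert_eq_ite, card_filter_mod_four_eq_one_or_two]
    split_ifs with h₁ <;> simp only [mem_filter, mem_range] at h₁ <;> omega

end SimpleGraph

open SimpleGraph

theorem totalDomination_cycleGraph (n : ℕ) (hn : 3 ≤ n) :
    (SimpleGraph.cycleGraph n).totalDominationNumber =
      if n % 4 = 0 then n / 2 else n / 2 + 1 := by
  obtain ⟨m, rfl⟩ : ∃ m, n = m + 3 := ⟨n - 3, by omega⟩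
  obtain ⟨S, hS, hcard⟩ := exists_totalDominatingSet_pathGraph_card (n := m + 3) (by omega)
  refine IsLeast.csInf_eq ⟨⟨S, hS.mono pathGraph_le_cycleGraph, ?_⟩, ?_⟩
  · rw [Set.ncard_coe_finset, hcard]
  · rintro _ ⟨T, hT, rfl⟩
    obtain ⟨T, rfl⟩ := T.toFinite.exists_finset_coe
    rw [Set.ncard_coe_finset]
    exact le_card_of_totalDominatingSet_cycleGraph hT
end

section
/- If G is a connected graph on n vertices with girth g(G) ≥ 5 and minimum degree δ(G) ≥ 2, then γ_t(G) ≤ n − ⌈g(G)/2⌉ + 1. -/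
/-!
Let `c` be a shortest cycle, of length `g ≥ 5`. A vertex `u` off `c` adjacent to two vertices
`a ≠ b` of `c` would close, with each of the two arcs of `c` between `a` and `b`, a cycle of length
at most that arc plus two; the arcs add up to `g`, so `2g ≤ g + 4`. Hence every vertex off `c` has
at most one neighbour on `c`, and since `δ ≥ 2` it has a neighbour off `c`. The vertices off `c`
together with a total dominating set of the cycle of size at most `⌊g/2⌋ + 1` (every vertex whose
position along `c` is `1` or `2` mod `4`) therefore form a total dominating set of `G`.
-/

open Finset

lemma card_filter_mod_four_le (n : ℕ) :
    #{i ∈ range (n + 1) | i % 4 = 1 ∨ i % 4 = 2} ≤ n / 2 + 1 := by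
  calc #{i ∈ range (n + 1) | i % 4 = 1 ∨ i % 4 = 2}
      ≤ #(range (n / 2 + 1)) := by
        refine card_le_card_of_injOn (fun i ↦ i - 2 * (i / 4) - 1) (fun i hi ↦ ?_) ?_
        · simp only [coe_filter, mem_range, Set.mem_ofPred_eq, coe_range, Set.mem_Iio] at hi ⊢
          omega
        · intro i hi j hj hij
          simp only [coe_filter, mem_range, Set.mem_ofPred_eq] at hi hj hij
          omega
    _ = n / 2 + 1 := card_range _

namespace SimpleGraph

variable {V : Type*} {G : SimpleGraph V}

lemma totalDominationNumber_le_card {S : Finset V} (hS : G.TotalDominatingSet S) :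
    G.totalDominationNumber ≤ #S :=
  Nat.sInf_le ⟨S, hS, Set.ncard_coe_finset S⟩

lemma girth_le_length_add_two {u a b : V} (hab : a ≠ b) (ha : G.Adj u a) (hb : G.Adj u b)
    (w : G.Walk a b) (hu : u ∉ w.support) : G.girth ≤ w.length + 2 := by
  classical
  have hup : u ∉ w.bypass.support := fun h ↦ hu (w.support_bypass_subset_support h)
  have hcycle : (Walk.cons ha (w.bypass.concat hb.symm)).IsCycle := by
    refine (Walk.cons_isCycle_iff _ ha).mpr ⟨w.bypass_isPath.concat hup hb.symm, fun he ↦ ?_⟩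
    rw [Walk.edges_concat, List.concat_eq_append, List.mem_append, List.mem_singleton] at he
    rcases he with he | he
    · exact hup (w.bypass.fst_mem_support_of_mem_edges he)
    · rcases Sym2.eq_iff.mp he with ⟨hub, hau⟩ | ⟨-, hab'⟩
      exacts [hab (hau.trans hub), hab hab']
  calc G.girth ≤ (Walk.cons ha (w.bypass.concat hb.symm)).length := G.girth_le_length hcycle
    _ = w.bypass.length + 2 := by simp only [Walk.length_cons, Walk.length_concat]
    _ ≤ w.length + 2 := Nat.add_le_add_right w.length_bypass_le_length 2

lemma two_mul_girth_le_length_add_four [DecidableEq V] {x u a b : V} (c : G.Walk x x)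
    (hu : u ∉ c.support) (ha : a ∈ c.support) (hb : b ∈ c.support) (hab : a ≠ b)
    (hua : G.Adj u a) (hub : G.Adj u b) : 2 * G.girth ≤ c.length + 4 := by
  set c' := c.rotate a ha
  have hb' : b ∈ c'.support := (c.mem_support_rotate_iff a ha).mpr hb
  have hu' : u ∉ c'.support := mt (c.mem_support_rotate_iff a ha).mp hu
  have h₁ := girth_le_length_add_two hab hua hub (c'.takeUntil b hb')
    fun h ↦ hu' (c'.support_takeUntil_subset_support hb' h)
  have h₂ := girth_le_length_add_two hab.symm hub hua (c'.dropUntil b hb')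
    fun h ↦ hu' (c'.support_dropUntil_subset_support hb' h)
  have hlen : (c'.takeUntil b hb').length + (c'.dropUntil b hb').length = c.length := by
    rw [← Walk.length_append, Walk.take_spec, Walk.length_rotate]
  omega

lemma exists_adj_notMem_support [Fintype V] [DecidableRel G.Adj] {x v : V} (c : G.Walk x x)
    (hc : c.length + 4 < 2 * G.girth) (hv : v ∉ c.support) (hdeg : 2 ≤ G.degree v) :
    ∃ w, G.Adj v w ∧ w ∉ c.support := by
  classical
  rw [← card_neighborFinset_eq_degree] at hdeg
  obtain ⟨a, ha, b, hb, hab⟩ := one_lt_card.mp hdeg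
  rw [mem_neighborFinset] at ha hb
  by_contra! hall
  have := two_mul_girth_le_length_add_four c hv (hall a ha) (hall b hb) hab ha hb
  omega

lemma Walk.IsCycle.card_support_toFinset [DecidableEq V] {x : V} {c : G.Walk x x}
    (hc : c.IsCycle) : #c.support.toFinset = c.length := by
  have hx : x ∈ c.support.tail.toFinset :=
    List.mem_toFinset.mpr (c.end_mem_tail_support hc.not_nil)
  rw [← c.cons_tail_support, List.toFinset_cons, insert_eq_of_mem hx,
    List.toFinset_card_of_nodup hc.support_nodup, List.length_tail, Walk.length_support]
  rfl

lemma Walk.exists_lt_length_getVert_eq {x v : V} {c : G.Walk x x} (hc : 0 < c.length)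
    (hv : v ∈ c.support) : ∃ i < c.length, c.getVert i = v := by
  obtain ⟨i, rfl, hi⟩ := Walk.mem_support_iff_exists_getVert.mp hv
  rcases hi.lt_or_eq with hi | rfl
  · exact ⟨i, hi, rfl⟩
  · exact ⟨0, hc, by rw [c.getVert_zero, c.getVert_length]⟩

lemma Walk.exists_dominating_support_card_le [DecidableEq V] {x : V} (c : G.Walk x x)
    (hc : 0 < c.length) :
    ∃ D : Finset V, #D ≤ c.length / 2 + 1 ∧ ∀ v ∈ c.support, ∃ d ∈ D, G.Adj v d := by
  set I := {i ∈ range (c.length + 1) | i % 4 = 1 ∨ i % 4 = 2}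
  have hI : ∀ i ≤ c.length, i % 4 = 1 ∨ i % 4 = 2 → c.getVert i ∈ I.image c.getVert :=
    fun i hi hmod ↦ mem_image_of_mem _ (mem_filter.mpr ⟨mem_range.mpr (by omega), hmod⟩)
  refine ⟨I.image c.getVert, card_image_le.trans (card_filter_mod_four_le _), fun v hv ↦ ?_⟩
  obtain ⟨i, hi, rfl⟩ := exists_lt_length_getVert_eq hc hv
  by_cases hlow : i % 4 = 0 ∨ i % 4 = 1
  · exact ⟨_, hI (i + 1) hi (by omega), c.adj_getVert_succ hi⟩
  · refine ⟨_, hI (i - 1) (by omega) (by omega), ?_⟩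
    have := c.adj_getVert_succ (i := i - 1) (by omega)
    rwa [Nat.sub_add_cancel (by omega : 1 ≤ i), adj_comm] at this

end SimpleGraph

open SimpleGraph in
theorem total_domination_le_of_girth_ge_five_general
    {V : Type*} [Fintype V] (G : SimpleGraph V) [DecidableRel G.Adj]
    (hg : 5 ≤ G.girth) (hδ : 2 ≤ G.minDegree) :
    G.totalDominationNumber ≤ Fintype.card V - (G.girth + 1) / 2 + 1 := by
  classical
  obtain ⟨x, c, hc, hlen⟩ := exists_girth_eq_length.mpr fun h ↦ by
    rw [girth_eq_zero.mpr h] at hg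
    omega
  obtain ⟨D, hDcard, hD⟩ := c.exists_dominating_support_card_le (by omega)
  set C := c.support.toFinset
  have hS : G.TotalDominatingSet ↑((univ \ C) ∪ D) := by
    intro v
    by_cases hv : v ∈ c.support
    · obtain ⟨d, hd, hvd⟩ := hD v hv
      exact ⟨d, by simp [hd], hvd⟩
    · obtain ⟨w, hvw, hw⟩ := exists_adj_notMem_support c (by omega) hv
        (hδ.trans (G.minDegree_le_degree v))
      exact ⟨w, by simp [C, hw], hvw⟩
  have hC : #C = c.length := hc.card_support_toFinset
  have hCn : #C ≤ Fintype.card V := card_le_univ C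
  calc G.totalDominationNumber ≤ #((univ \ C) ∪ D) := totalDominationNumber_le_card hS
    _ ≤ #(univ \ C) + #D := card_union_le _ _
    _ ≤ Fintype.card V - (G.girth + 1) / 2 + 1 := by
      rw [card_sdiff_of_subset (subset_univ C), card_univ]
      omega

theorem total_domination_le_of_girth_ge_five
    {V : Type*} [Fintype V] (G : SimpleGraph V) [DecidableRel G.Adj]
    (hconn : G.Connected) (hg : 5 ≤ G.girth) (hδ : 2 ≤ G.minDegree) :
    G.totalDominationNumber ≤ Fintype.card V - (G.girth + 1) / 2 + 1 :=
  total_domination_le_of_girth_ge_five_general G hg hδ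
end

section
/- For integers n and d with d ≥ 3 and n ≥ 4d − 2, the circular complete graph K_{n,d} satisfies γ_t(K_{n,d}) = 2; in fact {v_0, v_{2d−1}} is a total dominating set. -/
/-- The circular complete graph `K_{n,d}`: vertices `0, …, n-1`, with `i ~ j` iff
`d ≤ |i - j| ≤ n - d`. -/
def circularComplete (n d : ℕ) : SimpleGraph (Fin n) where
  Adj i j := i ≠ j ∧ d ≤ max i.val j.val - min i.val j.val ∧
      max i.val j.val - min i.val j.val ≤ n - d
  symm := by
    constructor
    intro i j h
    obtain ⟨h1, h2, h3⟩ := h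
    exact ⟨h1.symm, by omega, by omega⟩
  loopless := ⟨fun i h => h.1 rfl⟩


/-! The vertex `v_0` dominates the middle arc `d ≤ v ≤ n - d`, and `v_{2d-1}` dominates both
remaining arcs `v < d` and `v > n - d`; the second needs `n - d + 1 - (2d - 1) ≥ d`, i.e.
`n ≥ 4d - 2`. Conversely, no graph without loops is totally dominated by a single vertex. -/

namespace SimpleGraph

variable {V : Type*} {G : SimpleGraph V}

theorem TotalDominatingSet.one_lt_ncard [Nonempty V] {S : Set V} (hS : G.TotalDominatingSet S)
    (hfin : S.Finite) : 1 < S.ncard := by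
  obtain ⟨u, hu, -⟩ := hS (Classical.arbitrary V)
  obtain ⟨w, hw, huw⟩ := hS u
  exact (Set.one_lt_ncard hfin).2 ⟨u, hu, w, hw, huw.ne⟩

theorem totalDominationNumber_eq_two [Finite V] {a b : V} (hab : a ≠ b)
    (h : G.TotalDominatingSet {a, b}) : G.totalDominationNumber = 2 := by
  have : Nonempty V := ⟨a⟩
  refine IsLeast.csInf_eq ⟨⟨{a, b}, h, Set.ncard_pair hab⟩, ?_⟩
  rintro k ⟨S, hS, rfl⟩
  exact hS.one_lt_ncard S.toFinite

end SimpleGraph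

theorem circularComplete_adj_of_le {n d : ℕ} (hd : 0 < d) {i j : Fin n}
    (hij : i.val + d ≤ j.val) (hji : j.val + d ≤ i.val + n) : (circularComplete n d).Adj i j :=
  ⟨fun h => by subst h; omega, by omega, by omega⟩

theorem circularComplete_totalDominatingSet_pair {n d : ℕ} (hd : 1 ≤ d) (hn : 4 * d - 2 ≤ n) :
    (circularComplete n d).TotalDominatingSet
      {(⟨0, by omega⟩ : Fin n), ⟨2 * d - 1, by omega⟩} := by
  intro v
  by_cases hmid : d ≤ v.val ∧ v.val ≤ n - d
  · refine ⟨_, .inl rfl, ?_⟩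
    exact (circularComplete_adj_of_le hd (by dsimp only; omega) (by dsimp only; omega)).symm
  · refine ⟨_, .inr rfl, ?_⟩
    rcases Nat.lt_or_ge v.val d with hlow | hhigh
    · exact circularComplete_adj_of_le hd (by dsimp only; omega) (by dsimp only; omega)
    · exact (circularComplete_adj_of_le hd (by dsimp only; omega) (by dsimp only; omega)).symm

theorem totalDomination_circularComplete_eq_two (n d : ℕ) (hd : 3 ≤ d)
    (hn : 4 * d - 2 ≤ n) :
    (circularComplete n d).totalDominationNumber = 2 ∧
      (circularComplete n d).TotalDominatingSet
        {(⟨0, by omega⟩ : Fin n), ⟨2 * d - 1, by omega⟩} := by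
  have hpair := circularComplete_totalDominatingSet_pair (by omega) hn
  exact ⟨SimpleGraph.totalDominationNumber_eq_two (Fin.ne_of_val_ne (by dsimp only; omega)) hpair,
    hpair⟩
end

section
/- For integers n and d with d ≥ 3 and 3d ≤ n ≤ 4d − 3, the circular complete graph K_{n,d} satisfies γ_t(K_{n,d}) = 3. -/
namespace SimpleGraph

variable {V : Type*} {G : SimpleGraph V}

theorem totalDominationNumber_eq {k : ℕ}
    (hex : ∃ S, G.TotalDominatingSet S ∧ S.ncard = k)
    (hmin : ∀ S, G.TotalDominatingSet S → k ≤ S.ncard) :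
    G.totalDominationNumber = k :=
  IsLeast.csInf_eq ⟨hex, by rintro _ ⟨S, hS, rfl⟩; exact hmin S hS⟩

theorem TotalDominatingSet.card_le_ncard_mul_maxDegree [Fintype V] [DecidableRel G.Adj]
    {S : Set V} (hS : G.TotalDominatingSet S) :
    Fintype.card V ≤ S.ncard * G.maxDegree := by
  classical
  have hcover : Finset.univ ⊆ S.toFinset.biUnion fun u => G.neighborFinset u := by
    intro v _
    obtain ⟨u, hu, huv⟩ := hS v
    exact Finset.mem_biUnion.mpr
      ⟨u, Set.mem_toFinset.mpr hu, (G.mem_neighborFinset u v).mpr huv.symm⟩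
  calc Fintype.card V = (Finset.univ : Finset V).card := Finset.card_univ.symm
    _ ≤ (S.toFinset.biUnion fun u => G.neighborFinset u).card := Finset.card_le_card hcover
    _ ≤ ∑ u ∈ S.toFinset, G.degree u := Finset.card_biUnion_le
    _ ≤ ∑ _u ∈ S.toFinset, G.maxDegree := Finset.sum_le_sum fun u _ => G.degree_le_maxDegree u
    _ = S.ncard * G.maxDegree := by rw [Finset.sum_const, smul_eq_mul, Set.ncard_eq_toFinset_card']

end SimpleGraph

open SimpleGraph

section CircularComplete

variable {n d : ℕ}

instance (n d : ℕ) : DecidableRel (circularComplete n d).Adj := fun i j =>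
  inferInstanceAs (Decidable (i ≠ j ∧ _ ∧ _))

theorem circularComplete_adj_iff {i j : Fin n} :
    (circularComplete n d).Adj i j ↔ (i : ℕ) ≠ j ∧ d ≤ max (i : ℕ) j - min (i : ℕ) j ∧
      max (i : ℕ) j - min (i : ℕ) j ≤ n - d :=
  and_congr_left' Fin.val_ne_iff.symm

/-- `v ↦ (v - u) mod n` embeds the neighbours of `u` into the interval `[d, n - d]`. -/
theorem circularComplete_degree_le (u : Fin n) :
    (circularComplete n d).degree u ≤ n + 1 - 2 * d := by
  have hu := u.isLt
  have hinj : ((circularComplete n d).neighborFinset u).card ≤ (Finset.Icc d (n - d)).card := by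
    refine Finset.card_le_card_of_injOn
      (fun v => if (u : ℕ) ≤ v then (v : ℕ) - u else n - (u - v)) ?_ ?_
    · intro v hv
      rw [Finset.mem_coe, mem_neighborFinset, circularComplete_adj_iff] at hv
      have := v.isLt
      simp only [Finset.mem_coe, Finset.mem_Icc]
      split <;> omega
    · intro v₁ h₁ v₂ h₂ heq
      rw [Finset.mem_coe, mem_neighborFinset, circularComplete_adj_iff] at h₁ h₂
      have := v₁.isLt
      have := v₂.isLt
      apply Fin.ext
      dsimp only at heq
      split at heq <;> split at heq <;> omega
  rw [← card_neighborFinset_eq_degree]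
  rw [Nat.card_Icc] at hinj
  omega

theorem circularComplete_maxDegree_le : (circularComplete n d).maxDegree ≤ n + 1 - 2 * d :=
  maxDegree_le_of_forall_degree_le _ _ circularComplete_degree_le

theorem circularComplete_three_le_ncard (hn₀ : 0 < n) (hn : n + 2 < 4 * d) {S : Set (Fin n)}
    (hS : (circularComplete n d).TotalDominatingSet S) : 3 ≤ S.ncard := by
  have hcount := hS.card_le_ncard_mul_maxDegree.trans
    (Nat.mul_le_mul_left S.ncard circularComplete_maxDegree_le)
  rw [Fintype.card_fin] at hcount
  exact Nat.lt_of_mul_lt_mul_right (a := n + 1 - 2 * d) (by omega)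

theorem circularComplete_exists_totalDominatingSet_ncard_eq_three (hd : 2 ≤ d)
    (hn : 3 * d ≤ n + 1) :
    ∃ S : Set (Fin n), (circularComplete n d).TotalDominatingSet S ∧ S.ncard = 3 := by
  have hd_lt : d < n := by omega
  have hd'_lt : 2 * d - 1 < n := by omega
  refine ⟨{⟨0, by omega⟩, ⟨d, hd_lt⟩, ⟨2 * d - 1, hd'_lt⟩}, fun v => ?_, ?_⟩
  · have := v.isLt
    simp only [Set.mem_insert_iff, Set.mem_singleton_iff, exists_eq_or_imp, exists_eq_left,
      circularComplete_adj_iff]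
    omega
  · refine Set.ncard_eq_three.mpr ⟨_, _, _, ?_, ?_, ?_, rfl⟩ <;>
      simp only [ne_eq, Fin.mk.injEq] <;> omega

end CircularComplete

theorem totalDomination_circularComplete_eq_three (n d : ℕ) (hd : 3 ≤ d)
    (hn1 : 3 * d ≤ n) (hn2 : n ≤ 4 * d - 3) :
    (circularComplete n d).totalDominationNumber = 3 :=
  totalDominationNumber_eq
    (circularComplete_exists_totalDominatingSet_ncard_eq_three (by omega) (by omega))
    fun S hS => circularComplete_three_le_ncard (by omega) (by omega) hS
end

section
/- For integers n and d with d ≥ 3 and 3d ≤ n ≤ 4d − 3, the circular complete graph K_{n,d} has no total dominating set of size 2. -/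
namespace SimpleGraph

variable {V W : Type*} {G : SimpleGraph V} {H : SimpleGraph W}

theorem TotalDominatingSet.image_iso {S : Set V} (hS : G.TotalDominatingSet S) (e : G ≃g H) :
    H.TotalDominatingSet (e '' S) := by
  intro w
  obtain ⟨u, hu, hadj⟩ := hS (e.symm w)
  exact ⟨e u, Set.mem_image_of_mem e hu, by simpa using e.map_adj_iff.mpr hadj⟩

theorem TotalDominatingSet.adj_right_of_not_adj_left {a b v : V}
    (hS : G.TotalDominatingSet {a, b}) (hva : ¬G.Adj v a) : G.Adj v b := by
  obtain ⟨u, rfl | rfl, hadj⟩ := hS v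
  · exact absurd hadj hva
  · exact hadj

end SimpleGraph

namespace circularComplete

variable {n d : ℕ}

theorem adj_add_right (c i j : Fin n) :
    (circularComplete n d).Adj (i + c) (j + c) ↔ (circularComplete n d).Adj i j := by
  simp only [circularComplete, ne_eq, add_left_inj, Fin.val_add_eq_ite]
  split_ifs <;> omega

def addRight [NeZero n] (c : Fin n) : circularComplete n d ≃g circularComplete n d where
  toEquiv := Equiv.addRight c
  map_rel_iff' := adj_add_right c _ _

@[simp]
theorem addRight_apply [NeZero n] (c i : Fin n) : addRight (d := d) c i = i + c :=
  rfl

/-- The vertices `d - 1` and `n + 1 - d` are too close to `0` to be dominated by it, so `j`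
must dominate both; this needs `2d - 1 ≤ j ≤ n + 1 - 2d`, leaving no room when `n < 4d - 2`. -/
theorem not_totalDominatingSet_pair_zero [NeZero n] (hn : n ≤ 4 * d - 3) (j : Fin n) :
    ¬(circularComplete n d).TotalDominatingSet {0, j} := by
  intro hS
  obtain ⟨-, hj₁, hj₂⟩ := hS.adj_right_of_not_adj_left (v := 0) (circularComplete n d).irrefl
  simp only [Fin.val_zero] at hj₁ hj₂
  have hnear (k : ℕ) (hk : k < n) (hkd : k < d ∨ n < k + d) :
      (circularComplete n d).Adj ⟨k, hk⟩ j := by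
    refine hS.adj_right_of_not_adj_left fun ⟨_, h₁, h₂⟩ => ?_
    simp only [Fin.val_zero] at h₁ h₂
    omega
  obtain ⟨-, hl₁, -⟩ := hnear (d - 1) (by omega) (by omega)
  obtain ⟨-, hr₁, hr₂⟩ := hnear (n + 1 - d) (by omega) (by omega)
  simp only at hl₁ hr₁ hr₂
  omega

end circularComplete

theorem circularComplete_no_total_dominating_pair_general (n d : ℕ)
    (hn2 : n ≤ 4 * d - 3) :
    ¬ ∃ S : Set (Fin n), (circularComplete n d).TotalDominatingSet S ∧ S.ncard = 2 := by
  rintro ⟨S, hS, hcard⟩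
  obtain ⟨a, b, -, rfl⟩ := Set.ncard_eq_two.mp hcard
  have : NeZero n := ⟨a.pos.ne'⟩
  have hS₀ : (circularComplete n d).TotalDominatingSet {0, b - a} := by
    simpa [Set.image_pair, sub_eq_add_neg] using hS.image_iso (circularComplete.addRight (-a))
  exact circularComplete.not_totalDominatingSet_pair_zero hn2 _ hS₀

theorem circularComplete_no_total_dominating_pair (n d : ℕ) (hd : 3 ≤ d)
    (hn1 : 3 * d ≤ n) (hn2 : n ≤ 4 * d - 3) :
    ¬ ∃ S : Set (Fin n), (circularComplete n d).TotalDominatingSet S ∧ S.ncard = 2 :=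
  circularComplete_no_total_dominating_pair_general n d hn2
end
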